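/- arXiv:2507.13778 — 4 statements merged into one kernel-verified Lean document; each statement's English description precedes it below -/
import Mathlib

section
/- Let X be a compact topological space with a closed partial order ⪯, and let f : X → ℝ ∪ {∞} be lower semicontinuous and bounded below. Define f^↓(y) = inf { f(x) : x ⪯ y }. Then f^↓ is lower semicontinuous. -/
/-- Let `X` be a compact space with a closed partial order, and `f : X → ℝ ∪ {∞}` lower
semicontinuous and bounded below. Then `f^↓(y) = inf { f x : x ⪯ y }` is lower semicontinuous. -/
theorem lowerSemicontinuous_infBelow {X : Type*} [TopologicalSpace X] [CompactSpace X]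
    [PartialOrder X] (horder : IsClosed {p : X × X | p.1 ≤ p.2})
    (f : X → EReal) (hfin : ∀ x, f x ≠ ⊥)
    (hbdd : ∃ c : ℝ, ∀ x, (c : EReal) ≤ f x)
    (hf : LowerSemicontinuous f) :
    LowerSemicontinuous (fun y => ⨅ x ∈ {x | x ≤ y}, f x) := by
  rw [lowerSemicontinuous_iff_isClosed_preimage]
  intro c
  have key : (fun y => ⨅ x ∈ {x | x ≤ y}, f x) ⁻¹' Set.Iic c =
      ⋂ d ∈ Set.Ioi c, Prod.snd '' {p : X × X | f p.1 ≤ d ∧ p.1 ≤ p.2} := by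
    ext y
    simp only [Set.mem_preimage, Set.mem_Iic, Set.mem_iInter, Set.mem_image, Set.mem_setOf_eq,
      Set.mem_Ioi]
    constructor
    · intro h d hd
      have : (⨅ x ∈ {x | x ≤ y}, f x) < d := lt_of_le_of_lt h hd
      simp only [iInf_lt_iff] at this
      obtain ⟨a, ha, hfa⟩ := this
      exact ⟨(a, y), ⟨hfa.le, ha⟩, rfl⟩
    · intro h
      refine le_of_forall_gt_imp_ge_of_dense fun d hd => ?_
      obtain ⟨⟨a, y'⟩, ⟨hfa, hay⟩, rfl⟩ := h d hd
      exact le_trans (iInf_le_of_le a (iInf_le _ hay)) hfa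
  rw [key]
  refine isClosed_biInter fun d _ => ?_
  exact isClosedMap_snd_of_compactSpace _
    (((hf.isClosed_preimage d).preimage continuous_fst).inter horder)
end

section
/- Let X be a compact topological space with a closed partial order ⪯, and let f : X → ℝ ∪ {∞} be bounded below with compact domain dom f = {x : f(x) < ∞}. Define f^↓(y) = inf { f(x) : x ⪯ y }. Then dom f^↓ is compact. -/
/-- Let `X` be a compact space with a closed partial order, and `f : X → ℝ ∪ {∞}` bounded below
with compact domain `{x | f x < ∞}`. Then the domain of `f^↓(y) = inf { f x : x ⪯ y }` is
compact. -/
theorem isCompact_domain_infBelow {X : Type*} [TopologicalSpace X] [CompactSpace X]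
    [PartialOrder X] (horder : IsClosed {p : X × X | p.1 ≤ p.2})
    (f : X → EReal) (hfin : ∀ x, f x ≠ ⊥)
    (hbdd : ∃ c : ℝ, ∀ x, (c : EReal) ≤ f x)
    (hdom : IsCompact {x | f x < ⊤}) :
    IsCompact {y | (⨅ x ∈ {x | x ≤ y}, f x) < ⊤} := by
  have hset : {y | (⨅ x ∈ {x | x ≤ y}, f x) < ⊤} =
      Prod.snd '' (({x | f x < ⊤} ×ˢ Set.univ) ∩ {p : X × X | p.1 ≤ p.2}) := by
    ext y
    simp only [Set.mem_setOf_eq, Set.mem_image, Set.mem_inter_iff, Set.mem_prod,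
      Set.mem_univ, and_true, iInf_lt_iff]
    constructor
    · rintro ⟨x, hxy, hfx⟩
      exact ⟨(x, y), ⟨hfx, hxy⟩, rfl⟩
    · rintro ⟨⟨x, y'⟩, ⟨hfx, hxy⟩, rfl⟩
      exact ⟨x, by simpa [iInf_lt_iff] using ⟨hxy, hfx⟩⟩
  rw [hset]
  exact (((hdom.prod isCompact_univ).inter_right horder).image continuous_snd)
end

section
/- Let P be a probability measure on a finite set X and Q an n-type on X. Then (n+1)^{-|X|} · 2^{-n D(Q‖P)} ≤ P^{⊗n}(T^n(Q)) ≤ 2^{-n D(Q‖P)}, where T^n(Q) is the type class of Q and D(Q‖P) is the relative entropy (with the convention D(Q‖P) = ∞ if supp Q ⊄ supp P). -/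
/-- `Q` is an `n`-type: every probability is a multiple of `1/n`. -/
def IsNType {Z : Type*} (n : ℕ) (Q : Z → ℝ) : Prop :=
  ∀ z, ∃ k : ℕ, Q z = (k : ℝ) / n

/-- The type class of `Q`: strings of length `n` with empirical distribution `Q`. -/
def typeClass {Z : Type*} [Fintype Z] [DecidableEq Z] (n : ℕ) (Q : Z → ℝ) :
    Set (Fin n → Z) :=
  {s | ∀ z, ((Finset.univ.filter fun i => s i = z).card : ℝ) = n * Q z}

open Classical in
/-- The probability of the type class `T^n(Q)` under the product measure `P^{⊗n}`. -/
noncomputable def typeClassProb {Z : Type*} [Fintype Z] [DecidableEq Z] (n : ℕ)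
    (P Q : Z → ℝ) : ℝ :=
  ∑ s ∈ Finset.univ.filter (fun s : Fin n → Z => s ∈ typeClass n Q), ∏ i, P (s i)

open Classical in
/-- The relative entropy `D(Q‖P)` (base 2), assuming `supp Q ⊆ supp P`. -/
noncomputable def relEnt {Z : Type*} [Fintype Z] (P Q : Z → ℝ) : ℝ :=
  ∑ z ∈ Finset.univ.filter (fun z => Q z ≠ 0), Q z * Real.logb 2 (Q z / P z)

/-!
Let `k = n Q`, so that the type class `T` of `Q` consists of the strings with letter counts `k`.
Every string in `T` has `P^{⊗n}`-probability `∏ P(z)^{k z} = 2^{-n D(Q‖P)} ∏ Q(z)^{k z}`, hence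
`P^{⊗n}(T) = 2^{-n D(Q‖P)} Q^{⊗n}(T)`, and `P^{⊗n}(T) = 0` as soon as `P z = 0 < k z` for some `z`.
The upper bound is then `Q^{⊗n}(T) ≤ 1`. For the lower bound, the multinomial count
`|T_c| ∏ c_z! = n!` of the strings with letter counts `c`, combined with `k! k^c ≤ c! k^k`, shows
that `T` has the largest `Q^{⊗n}`-probability among the at most `(n+1)^{|Z|}` classes `T_c`,
whose probabilities sum to `1`.
-/

open Finset

section Counting

variable {Z : Type*} [DecidableEq Z] {n : ℕ}

def letterCount (x : Fin n → Z) (z : Z) : ℕ := #{i | x i = z}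

def countClass [Fintype Z] (n : ℕ) (c : Z → ℕ) : Finset (Fin n → Z) := {x | letterCount x = c}

@[simp]
lemma mem_countClass [Fintype Z] {c : Z → ℕ} {x : Fin n → Z} :
    x ∈ countClass n c ↔ letterCount x = c := by
  simp [countClass]

lemma letterCount_le (x : Fin n → Z) (z : Z) : letterCount x z ≤ n :=
  (card_filter_le _ _).trans_eq (card_fin n)

lemma letterCount_comp_perm (x : Fin n → Z) (σ : Equiv.Perm (Fin n)) :
    letterCount (x ∘ σ) = letterCount x :=
  funext fun z => card_equiv σ (by simp)

lemma prod_apply_eq_prod_pow_letterCount [Fintype Z] {M : Type*} [CommMonoid M] (f : Z → M)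
    (x : Fin n → Z) : ∏ i, f (x i) = ∏ z, f z ^ letterCount x z := by
  rw [← prod_fiberwise univ x]
  refine prod_congr rfl fun z _ => ?_
  rw [prod_congr rfl fun i hi => congrArg f (mem_filter.1 hi).2, prod_const]
  rfl

lemma exists_letterCount_eq [Fintype Z] {c : Z → ℕ} (hc : ∑ z, c z = n) :
    ∃ x : Fin n → Z, letterCount x = c := by
  let e : (Σ z, Fin (c z)) ≃ Fin n := Fintype.equivOfCardEq (by simp [hc])
  refine ⟨fun i => (e.symm i).1, funext fun z => ?_⟩
  rw [letterCount, ← Fintype.card_subtype]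
  calc _ = Fintype.card {p : Σ z, Fin (c z) // p.1 = z} :=
        (Fintype.card_congr (e.subtypeEquiv fun p => by simp)).symm
    _ = c z := by rw [Fintype.card_congr (Equiv.sigmaSubtype z), Fintype.card_fin]

lemma card_perm_comp_eq [Fintype Z] {x y : Fin n → Z} (h : letterCount x = letterCount y) :
    #{σ : Equiv.Perm (Fin n) | y ∘ σ = x} = ∏ z, (letterCount x z).factorial := by
  have hfiber (z : Z) : Fintype.card {i // x i = z} = Fintype.card {i // y i = z} := by
    simpa only [Fintype.card_subtype, letterCount] using congrFun h z
  let τ : Equiv.Perm (Fin n) :=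
    Equiv.ofFiberEquiv fun z => Fintype.equivOfCardEq (hfiber z)
  have hτ : x ∘ ⇑τ⁻¹ = y := by
    have hyτ : ∀ i, y (τ i) = x i := Equiv.ofFiberEquiv_map _
    funext i
    rw [Function.comp_apply, ← hyτ (τ⁻¹ i), ← Equiv.Perm.mul_apply, mul_inv_cancel,
      Equiv.Perm.one_apply]
  rw [← Fintype.card_subtype]
  -- `τ` carries `x` to `y` fibre by fibre, so `σ ↦ τ⁻¹ * σ` lands in the stabilizer of `x`.
  calc _ = Fintype.card {σ : Equiv.Perm (Fin n) // x ∘ σ = x} :=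
        Fintype.card_congr <| (Equiv.mulLeft τ⁻¹).subtypeEquiv fun σ => by
          rw [Equiv.coe_mulLeft, Equiv.Perm.coe_mul, ← Function.comp_assoc, hτ]
    _ = _ := by rw [DomMulAct.stabilizer_card]; simp only [Fintype.card_subtype, letterCount]

lemma card_countClass_mul_prod_factorial [Fintype Z] {c : Z → ℕ} (hc : ∑ z, c z = n) :
    #(countClass n c) * ∏ z, (c z).factorial = n.factorial := by
  obtain ⟨x₀, hx₀⟩ := exists_letterCount_eq hc
  have hmaps (σ : Equiv.Perm (Fin n)) : x₀ ∘ σ ∈ countClass n c := by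
    rw [mem_countClass, letterCount_comp_perm, hx₀]
  have hfib (x : Fin n → Z) (hx : x ∈ countClass n c) :
      #{σ : Equiv.Perm (Fin n) | x₀ ∘ σ = x} = ∏ z, (c z).factorial := by
    rw [mem_countClass] at hx
    rw [card_perm_comp_eq (hx.trans hx₀.symm), hx]
  have hperm : #(univ : Finset (Equiv.Perm (Fin n))) = n.factorial := by
    rw [card_univ, Fintype.card_perm, Fintype.card_fin]
  rw [← hperm, card_eq_sum_card_fiberwise fun σ _ => hmaps σ, sum_congr rfl hfib, sum_const,
    smul_eq_mul]

end Counting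

lemma Nat.factorial_mul_pow_le_factorial_mul_pow (k c : ℕ) :
    k.factorial * k ^ c ≤ c.factorial * k ^ k := by
  rcases le_total c k with hck | hkc
  · have hk : k.factorial = c.factorial * k.descFactorial (k - c) := by
      rw [← Nat.factorial_mul_descFactorial (Nat.sub_le k c), Nat.sub_sub_self hck]
    calc k.factorial * k ^ c ≤ c.factorial * k ^ (k - c) * k ^ c := by
          rw [hk, mul_assoc, mul_assoc]
          exact Nat.mul_le_mul_left _ (Nat.mul_le_mul_right _ (Nat.descFactorial_le_pow _ _))
      _ = c.factorial * k ^ k := by rw [mul_assoc, ← pow_add, Nat.sub_add_cancel hck]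
  · calc k.factorial * k ^ c = k.factorial * k ^ (c - k) * k ^ k := by
          rw [mul_assoc, ← pow_add, Nat.sub_add_cancel hkc]
      _ ≤ c.factorial * k ^ k :=
          Nat.mul_le_mul_right _ (Nat.factorial_mul_pow_sub_le_factorial hkc)

section CountClass

variable {Z : Type*} [Fintype Z] [DecidableEq Z] {n : ℕ}

lemma sum_letterCount (x : Fin n → Z) : ∑ z, letterCount x z = n :=
  (card_eq_sum_card_fiberwise fun i _ => mem_univ (x i)).symm.trans (card_fin n)

lemma sum_eq_of_mem_countClass {c : Z → ℕ} {x : Fin n → Z} (hx : x ∈ countClass n c) :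
    ∑ z, c z = n := by
  rw [← mem_countClass.1 hx, sum_letterCount]

lemma card_countClass_mul_prod_pow_le {k : Z → ℕ} (hk : ∑ z, k z = n) (c : Z → ℕ) :
    #(countClass n c) * ∏ z, k z ^ c z ≤ #(countClass n k) * ∏ z, k z ^ k z := by
  obtain hempty | ⟨x, hx⟩ := (countClass n c).eq_empty_or_nonempty
  · simp [hempty]
  have hc := card_countClass_mul_prod_factorial (sum_eq_of_mem_countClass hx)
  have hk' := card_countClass_mul_prod_factorial hk
  have hpos : 0 < (∏ z, (c z).factorial) * ∏ z, (k z).factorial := by positivity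
  refine Nat.le_of_mul_le_mul_right ?_ hpos
  calc (#(countClass n c) * ∏ z, k z ^ c z) * ((∏ z, (c z).factorial) * ∏ z, (k z).factorial)
      = n.factorial * ∏ z, ((k z).factorial * k z ^ c z) := by
        rw [← hc, prod_mul_distrib]; ring
    _ ≤ n.factorial * ∏ z, ((c z).factorial * k z ^ k z) := Nat.mul_le_mul_left _ <|
        prod_le_prod' fun z _ => (k z).factorial_mul_pow_le_factorial_mul_pow (c z)
    _ = (#(countClass n k) * ∏ z, k z ^ k z) *
          ((∏ z, (c z).factorial) * ∏ z, (k z).factorial) := by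
        rw [← hk', prod_mul_distrib]; ring

lemma sum_countClass_prod_apply {R : Type*} [CommSemiring R] (f : Z → R) (c : Z → ℕ) :
    ∑ x ∈ countClass n c, ∏ i, f (x i) = #(countClass n c) * ∏ z, f z ^ c z := by
  rw [sum_congr rfl fun x hx => by rw [prod_apply_eq_prod_pow_letterCount, mem_countClass.1 hx],
    sum_const, nsmul_eq_mul]

lemma sum_card_countClass_mul_prod_pow {R : Type*} [CommSemiring R] (f : Z → R) :
    ∑ c ∈ Fintype.piFinset fun _ => range (n + 1), #(countClass n c) * ∏ z, f z ^ c z =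
      (∑ z, f z) ^ n := by
  have hmaps (x : Fin n → Z) : letterCount x ∈ Fintype.piFinset fun _ : Z => range (n + 1) :=
    Fintype.mem_piFinset.2 fun z => mem_range.2 (Nat.lt_succ_of_le (letterCount_le x z))
  rw [Fintype.sum_pow, ← sum_fiberwise_of_maps_to fun x _ => hmaps x]
  exact sum_congr rfl fun c _ => (sum_countClass_prod_apply f c).symm

end CountClass

section TypeClass

variable {Z : Type*} [Fintype Z] [DecidableEq Z] {n : ℕ}

lemma card_countClass_mul_prod_pow_le_of_natCast_eq {Q : Z → ℝ} {k : Z → ℕ} (hn : 0 < n)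
    (hkQ : ∀ z, (k z : ℝ) = n * Q z) (hk : ∑ z, k z = n) (c : Z → ℕ) :
    #(countClass n c) * ∏ z, Q z ^ c z ≤ #(countClass n k) * ∏ z, Q z ^ k z := by
  have hQ (z : Z) : Q z = k z / n := eq_div_of_mul_eq (by positivity) (by rw [hkQ, mul_comm])
  have hprod {d : Z → ℕ} (hd : ∑ z, d z = n) :
      ∏ z, Q z ^ d z = (∏ z, (k z : ℝ) ^ d z) / n ^ n := by
    rw [prod_congr rfl fun z _ => by rw [hQ, div_pow], prod_div_distrib, prod_pow_eq_pow_sum, hd]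
  obtain hempty | ⟨x, hx⟩ := (countClass n c).eq_empty_or_nonempty
  · rw [hempty, card_empty, Nat.cast_zero, zero_mul]
    exact mul_nonneg (Nat.cast_nonneg _) (prod_nonneg fun z _ => by rw [hQ]; positivity)
  rw [hprod (sum_eq_of_mem_countClass hx), hprod hk, mul_div_assoc', mul_div_assoc']
  exact div_le_div_of_nonneg_right (by exact_mod_cast card_countClass_mul_prod_pow_le hk c)
    (by positivity)

lemma one_le_mul_card_countClass_mul_prod_pow {Q : Z → ℝ} {k : Z → ℕ} (hn : 0 < n)
    (hkQ : ∀ z, (k z : ℝ) = n * Q z) (hk : ∑ z, k z = n) (hQ : ∑ z, Q z = 1) :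
    1 ≤ (n + 1 : ℝ) ^ Fintype.card Z * (#(countClass n k) * ∏ z, Q z ^ k z) := by
  calc (1 : ℝ)
      = ∑ c ∈ Fintype.piFinset fun _ => range (n + 1), #(countClass n c) * ∏ z, Q z ^ c z := by
        rw [sum_card_countClass_mul_prod_pow, hQ, one_pow]
    _ ≤ ∑ c ∈ Fintype.piFinset fun _ : Z => range (n + 1), #(countClass n k) * ∏ z, Q z ^ k z :=
        sum_le_sum fun c _ => card_countClass_mul_prod_pow_le_of_natCast_eq hn hkQ hk c
    _ = _ := by simp

lemma card_countClass_mul_prod_pow_le_one {P : Z → ℝ} (hP0 : ∀ z, 0 ≤ P z) (hP : ∑ z, P z = 1)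
    (c : Z → ℕ) : #(countClass n c) * ∏ z, P z ^ c z ≤ 1 := by
  calc #(countClass n c) * ∏ z, P z ^ c z = ∑ x ∈ countClass n c, ∏ i, P (x i) :=
        (sum_countClass_prod_apply P c).symm
    _ ≤ ∑ x : Fin n → Z, ∏ i, P (x i) :=
        sum_le_sum_of_subset_of_nonneg (subset_univ _) fun x _ _ => prod_nonneg fun i _ => hP0 _
    _ = 1 := by rw [← Fintype.sum_pow, hP, one_pow]

lemma typeClassProb_eq_card_countClass_mul {Q : Z → ℝ} {k : Z → ℕ}
    (hkQ : ∀ z, (k z : ℝ) = n * Q z) (P : Z → ℝ) :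
    typeClassProb n P Q = #(countClass n k) * ∏ z, P z ^ k z := by
  rw [typeClassProb, ← sum_countClass_prod_apply]
  refine sum_congr (ext fun x => ?_) fun _ _ => rfl
  simp [typeClass, countClass, funext_iff, letterCount, ← hkQ]

end TypeClass

lemma pow_eq_two_rpow_neg_mul_mul_logb_mul_pow {p q : ℝ} (hp : 0 < p) (hq : 0 < q) {n k : ℕ}
    (hk : (k : ℝ) = n * q) :
    p ^ k = 2 ^ (-(n * (q * Real.logb 2 (q / p)))) * q ^ k := by
  have hexp : -(n * (q * Real.logb 2 (q / p))) = Real.logb 2 (p / q) * k := by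
    rw [hk, ← inv_div, Real.logb_inv]; ring
  rw [hexp, Real.rpow_mul zero_le_two, Real.rpow_logb two_pos (by norm_num) (div_pos hp hq),
    Real.rpow_natCast, ← mul_pow, div_mul_cancel₀ _ hq.ne']

lemma prod_pow_eq_two_rpow_neg_mul_relEnt_mul {Z : Type*} [Fintype Z] {P Q : Z → ℝ}
    (hP0 : ∀ z, 0 ≤ P z) (hQ0 : ∀ z, 0 ≤ Q z) (hsupp : ∀ z, Q z ≠ 0 → P z ≠ 0) {n : ℕ}
    {k : Z → ℕ} (hkQ : ∀ z, (k z : ℝ) = n * Q z) :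
    ∏ z, P z ^ k z = 2 ^ (-(n * relEnt P Q)) * ∏ z, Q z ^ k z := by
  classical
  rw [relEnt, sum_filter, mul_sum, ← sum_neg_distrib, Real.rpow_sum_of_pos two_pos,
    ← prod_mul_distrib]
  refine prod_congr rfl fun z _ => ?_
  split_ifs with hQz
  · exact pow_eq_two_rpow_neg_mul_mul_logb_mul_pow ((hP0 z).lt_of_ne' (hsupp z hQz))
      ((hQ0 z).lt_of_ne' hQz) (hkQ z)
  · have hkz : k z = 0 := by rw [← Nat.cast_eq_zero (R := ℝ), hkQ, not_not.1 hQz, mul_zero]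
    simp [hkz]

theorem typeClassProb_bounds_general {Z : Type*} [Fintype Z] [DecidableEq Z] (n : ℕ) (hn : 0 < n)
    (P Q : Z → ℝ) (hP0 : ∀ z, 0 ≤ P z)
    (hQ0 : ∀ z, 0 ≤ Q z) (hQsum : ∑ z, Q z = 1) (hQtype : IsNType n Q) :
    ((∀ z, Q z ≠ 0 → P z ≠ 0) →
      (1 / ((n + 1 : ℝ) ^ Fintype.card Z)) * (2 : ℝ) ^ (-((n : ℝ) * relEnt P Q)) ≤
          typeClassProb n P Q ∧
        typeClassProb n P Q ≤ (2 : ℝ) ^ (-((n : ℝ) * relEnt P Q))) ∧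
    ((¬ ∀ z, Q z ≠ 0 → P z ≠ 0) → typeClassProb n P Q = 0) := by
  choose k hk using hQtype
  have hkQ (z : Z) : (k z : ℝ) = n * Q z := by rw [hk z, mul_div_cancel₀ _ (by positivity)]
  have hksum : ∑ z, k z = n := by
    have : ((∑ z, k z : ℕ) : ℝ) = n := by simp_rw [Nat.cast_sum, hkQ, ← mul_sum, hQsum, mul_one]
    exact_mod_cast this
  have hprob := typeClassProb_eq_card_countClass_mul hkQ
  refine ⟨fun hsupp => ?_, fun hsupp => ?_⟩
  · have hlow := one_le_mul_card_countClass_mul_prod_pow hn hkQ hksum hQsum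
    have hup := card_countClass_mul_prod_pow_le_one (n := n) hQ0 hQsum k
    rw [← hprob] at hlow hup
    have hPQ : typeClassProb n P Q = typeClassProb n Q Q * 2 ^ (-(n * relEnt P Q)) := by
      rw [hprob, hprob, prod_pow_eq_two_rpow_neg_mul_relEnt_mul hP0 hQ0 hsupp hkQ]; ring
    have hD : (0 : ℝ) ≤ 2 ^ (-(n * relEnt P Q)) := by positivity
    rw [hPQ]
    constructor
    · gcongr
      rw [div_le_iff₀ (by positivity)]
      linarith
    · exact mul_le_of_le_one_left hD hup
  · obtain ⟨z, hQz, hPz⟩ := not_forall₂.1 hsupp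
    have hkz : k z ≠ 0 := by exact_mod_cast (hkQ z).trans_ne (mul_ne_zero (by positivity) hQz)
    rw [hprob, prod_eq_zero (mem_univ z) (by rw [not_not.1 hPz, zero_pow hkz]), mul_zero]

/-- For a probability measure `P` on a finite set and an `n`-type `Q`:
`(n+1)^{-|X|} 2^{-n D(Q‖P)} ≤ P^{⊗n}(T^n(Q)) ≤ 2^{-n D(Q‖P)}`, with the convention
`D(Q‖P) = ∞` (so that both bounds read `P^{⊗n}(T^n(Q)) = 0`) when `supp Q ⊄ supp P`. -/
theorem typeClassProb_bounds {Z : Type*} [Fintype Z] [DecidableEq Z] (n : ℕ) (hn : 0 < n)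
    (P Q : Z → ℝ) (hP0 : ∀ z, 0 ≤ P z) (hPsum : ∑ z, P z = 1)
    (hQ0 : ∀ z, 0 ≤ Q z) (hQsum : ∑ z, Q z = 1) (hQtype : IsNType n Q) :
    ((∀ z, Q z ≠ 0 → P z ≠ 0) →
      (1 / ((n + 1 : ℝ) ^ Fintype.card Z)) * (2 : ℝ) ^ (-((n : ℝ) * relEnt P Q)) ≤
          typeClassProb n P Q ∧
        typeClassProb n P Q ≤ (2 : ℝ) ^ (-((n : ℝ) * relEnt P Q))) ∧
    ((¬ ∀ z, Q z ≠ 0 → P z ≠ 0) → typeClassProb n P Q = 0) :=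
  typeClassProb_bounds_general n hn P Q hP0 hQ0 hQsum hQtype
end

section
/- Let μ be a probability measure on ℝ^m whose distribution is invariant under conjugation by each diagonal orthogonal matrix (identifying ℝ^m with the off-diagonal entries of symmetric matrices with all-ones diagonal), and suppose there exists θ with halfspace depth α_μ(θ) ≥ 1/(m+1). Then the identity matrix I satisfies α_μ(I) ≥ 1/(m+1), where α_μ(x) = inf over nonzero c of μ({y : ⟨c, y − x⟩ ≤ 0}). -/
open MeasureTheory
open scoped ENNReal

/-- The halfspace depth of a point `θ` (here points are `d × d` real arrays, with the
trace inner product) with respect to a measure `μ`. -/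
noncomputable def halfspaceDepth {d : ℕ} (μ : Measure (Fin d → Fin d → ℝ))
    (θ : Fin d → Fin d → ℝ) : ℝ≥0∞ :=
  ⨅ (c : Fin d → Fin d → ℝ) (_ : c ≠ 0),
    μ {x | ∑ i, ∑ j, c i j * (x i j - θ i j) ≤ 0}

/-- Let `μ` be a probability measure concentrated on symmetric matrices with all-ones diagonal
(identified with `ℝ^m`, `m = d(d−1)/2`, via the off-diagonal entries), invariant under
conjugation by diagonal sign matrices. If some point has halfspace depth at least `1/(m+1)`,
then the identity matrix has halfspace depth at least `1/(m+1)`. -/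
theorem halfspaceDepth_identity {d : ℕ} (μ : Measure (Fin d → Fin d → ℝ))
    [IsProbabilityMeasure μ]
    (hsupp : μ {x | (∀ i, x i i = 1) ∧ ∀ i j, x i j = x j i} = 1)
    (hinv : ∀ s : Fin d → ℝ, (∀ i, s i = 1 ∨ s i = -1) →
      μ.map (fun x => fun i j => s i * x i j * s j) = μ)
    (hθ : ∃ θ : Fin d → Fin d → ℝ,
      (1 : ℝ≥0∞) / (d * (d - 1) / 2 + 1 : ℕ) ≤ halfspaceDepth μ θ) :
    (1 : ℝ≥0∞) / (d * (d - 1) / 2 + 1 : ℕ) ≤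
      halfspaceDepth μ (fun i j => if i = j then 1 else 0) := by
  classical
  obtain ⟨θ, hθ⟩ := hθ
  set α : ℝ≥0∞ := (1 : ℝ≥0∞) / (d * (d - 1) / 2 + 1 : ℕ) with hαdef
  have hθ' : ∀ c : Fin d → Fin d → ℝ, c ≠ 0 →
      α ≤ μ {x | ∑ i, ∑ j, c i j * (x i j - θ i j) ≤ 0} := by
    intro c hc
    exact hθ.trans (iInf₂_le c hc)
  have hα1 : α ≤ 1 := by
    rw [hαdef]
    apply ENNReal.div_le_of_le_mul
    rw [one_mul]
    exact_mod_cast Nat.one_le_iff_ne_zero.mpr (Nat.succ_ne_zero _)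
  have heval : ∀ i j : Fin d, Measurable fun x : Fin d → Fin d → ℝ => x i j :=
    fun i j => (measurable_pi_apply j).comp (measurable_pi_apply i)
  set S := {x : Fin d → Fin d → ℝ | (∀ i, x i i = 1) ∧ ∀ i j, x i j = x j i} with hSdef
  have hSmeas : MeasurableSet S := by
    have hSeq : S = (⋂ i, {x : Fin d → Fin d → ℝ | x i i = 1}) ∩
        ⋂ i, ⋂ j, {x : Fin d → Fin d → ℝ | x i j = x j i} := by
      ext x; simp [hSdef]
    rw [hSeq]
    exact (MeasurableSet.iInter fun i =>
        measurableSet_eq_fun (heval i i) measurable_const).inter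
      (MeasurableSet.iInter fun i => MeasurableSet.iInter fun j =>
        measurableSet_eq_fun (heval i j) (heval j i))
  have hScompl : μ Sᶜ = 0 := (prob_compl_eq_zero_iff hSmeas).mpr hsupp
  rw [halfspaceDepth]
  refine le_iInf fun c => le_iInf fun hc => ?_
  set c' : Fin d → Fin d → ℝ := fun i j => if i = j then 0 else c i j with hc'def
  have hkey : ∀ x ∈ S, (∑ i, ∑ j, c i j * (x i j - (if i = j then (1:ℝ) else 0)))
      = ∑ i, ∑ j, c' i j * x i j := by
    intro x hx
    refine Finset.sum_congr rfl fun i _ => Finset.sum_congr rfl fun j _ => ?_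
    by_cases h : i = j
    · subst h; simp [hc'def, hx.1 i]
    · simp [hc'def, h]
  by_cases h0 : c' = 0
  · -- c is diagonal; on the support the linear form vanishes
    have hsub : S ⊆ {x | ∑ i, ∑ j, c i j * (x i j - (if i = j then (1:ℝ) else 0)) ≤ 0} := by
      intro x hx
      have := hkey x hx
      simp only [Set.mem_setOf_eq]
      rw [this, h0]
      simp
    calc α ≤ 1 := hα1
      _ = μ S := hsupp.symm
      _ ≤ _ := measure_mono hsub
  · -- main case
    set σ : Bool → ℝ := fun b => if b then 1 else -1 with hσdef
    have hσsq : ∀ b, σ b * σ b = 1 := by intro b; cases b <;> norm_num [hσdef]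
    have hσnot : ∀ b, σ (!b) = -σ b := by intro b; cases b <;> norm_num [hσdef]
    have hσpm : ∀ b, σ b = 1 ∨ σ b = -1 := by intro b; cases b <;> simp [hσdef]
    -- the sum over all sign vectors of the pairing with θ vanishes
    have hsum0 : ∑ s : Fin d → Bool,
        (∑ i, ∑ j, (σ (s i) * c' i j * σ (s j)) * θ i j) = 0 := by
      rw [Finset.sum_comm]
      refine Finset.sum_eq_zero fun i _ => ?_
      rw [Finset.sum_comm]
      refine Finset.sum_eq_zero fun j _ => ?_
      by_cases h : i = j
      · subst h
        refine Finset.sum_eq_zero fun s _ => ?_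
        simp [hc'def]
      · refine Finset.sum_ninvolution (fun s => Function.update s i (!(s i))) ?_ ?_ ?_ ?_
        · intro s
          simp only [Function.update_self, Function.update_of_ne (Ne.symm h), hσnot]
          ring
        · intro s hne heq
          have := congrFun heq i
          simp only [Function.update_self] at this
          exact (Bool.not_ne_self (s i)) this
        · intro s; exact Finset.mem_univ _
        · intro s
          funext k
          by_cases hk : k = i
          · subst hk; simp [Function.update_self]
          · simp [Function.update_of_ne hk]
    obtain ⟨s, -, hs0⟩ := Finset.exists_le_of_sum_le (Finset.univ_nonempty)
      (le_of_eq (hsum0.trans (Finset.sum_const_zero).symm) :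
        ∑ s : Fin d → Bool, (∑ i, ∑ j, (σ (s i) * c' i j * σ (s j)) * θ i j)
          ≤ ∑ _s : Fin d → Bool, (0:ℝ))
    set sr : Fin d → ℝ := fun i => σ (s i) with hsrdef
    have hsrpm : ∀ i, sr i = 1 ∨ sr i = -1 := fun i => hσpm (s i)
    have hsrsq : ∀ i, sr i * sr i = 1 := fun i => hσsq (s i)
    set c'' : Fin d → Fin d → ℝ := fun i j => sr i * c' i j * sr j with hc''def
    have hc''ne : c'' ≠ 0 := by
      intro h
      apply h0
      funext i j
      have hz : sr i * c' i j * sr j = 0 := by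
        have := congrFun (congrFun h i) j
        simpa [hc''def] using this
      calc c' i j = (sr i * sr i) * c' i j * (sr j * sr j) := by
            rw [hsrsq i, hsrsq j]; ring
        _ = sr i * (sr i * c' i j * sr j) * sr j := by ring
        _ = sr i * 0 * sr j := by rw [hz]
        _ = 0 := by ring
    -- the transformation
    set T : (Fin d → Fin d → ℝ) → (Fin d → Fin d → ℝ) :=
      fun x => fun i j => sr i * x i j * sr j with hTdef
    have hTmeas : Measurable T := by
      refine measurable_pi_lambda _ fun i => measurable_pi_lambda _ fun j => ?_
      exact ((heval i j).const_mul (sr i)).mul_const (sr j)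
    have hmap : μ.map T = μ := hinv sr hsrpm
    set A := {x : Fin d → Fin d → ℝ | ∑ i, ∑ j, c' i j * x i j ≤ 0} with hAdef
    have hAmeas : MeasurableSet A := by
      refine measurableSet_le ?_ measurable_const
      refine Finset.measurable_sum _ fun i _ => Finset.measurable_sum _ fun j _ => ?_
      exact (heval i j).const_mul _
    have hpre : T ⁻¹' A = {x | ∑ i, ∑ j, c'' i j * x i j ≤ 0} := by
      ext x
      simp only [Set.mem_preimage, hAdef, Set.mem_setOf_eq, hTdef]
      have : ∑ i, ∑ j, c' i j * (sr i * x i j * sr j)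
          = ∑ i, ∑ j, c'' i j * x i j := by
        refine Finset.sum_congr rfl fun i _ => Finset.sum_congr rfl fun j _ => ?_
        show c' i j * (sr i * x i j * sr j) = (sr i * c' i j * sr j) * x i j
        ring
      rw [this]
    have hθsum : ∑ i, ∑ j, c'' i j * θ i j ≤ 0 := hs0
    have hsubset : {x : Fin d → Fin d → ℝ | ∑ i, ∑ j, c'' i j * (x i j - θ i j) ≤ 0}
        ⊆ T ⁻¹' A := by
      rw [hpre]
      intro x hx
      simp only [Set.mem_setOf_eq] at hx ⊢
      have hexp : ∑ i, ∑ j, c'' i j * (x i j - θ i j)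
          = (∑ i, ∑ j, c'' i j * x i j) - ∑ i, ∑ j, c'' i j * θ i j := by
        rw [← Finset.sum_sub_distrib]
        refine Finset.sum_congr rfl fun i _ => ?_
        rw [← Finset.sum_sub_distrib]
        refine Finset.sum_congr rfl fun j _ => ?_
        ring
      rw [hexp] at hx
      linarith
    have hmainA : α ≤ μ A := by
      have h1 : μ A = μ (T ⁻¹' A) := by
        conv_lhs => rw [← hmap]
        exact Measure.map_apply hTmeas hAmeas
      rw [h1]
      exact (hθ' c'' hc''ne).trans (measure_mono hsubset)
    -- finish via the support
    have hABsub : A ∩ S ⊆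
        {x | ∑ i, ∑ j, c i j * (x i j - (if i = j then (1:ℝ) else 0)) ≤ 0} := by
      rintro x ⟨hxA, hxS⟩
      simp only [Set.mem_setOf_eq]
      rw [hkey x hxS]
      exact hxA
    have hdiff : μ (A \ S) = 0 :=
      measure_mono_null (fun x hx => hx.2) hScompl
    calc α ≤ μ A := hmainA
      _ ≤ μ (A ∩ S) + μ (A \ S) := measure_le_inter_add_diff μ A S
      _ = μ (A ∩ S) := by rw [hdiff, add_zero]
      _ ≤ _ := measure_mono hABsub
end
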